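/- There exists Λ₀ ≥ 2 with the following property: for every Λ ≥ Λ₀, with a := 1 − e^{−4} + (1/3)·(1 − e^{−4})²·Λ^{−1/4} and v_Λ defined as below for any convex even Φ with Φ(z) = |z| for |z| ≥ 1/100, there exists η > 0 such that v_Λ(s) = 2·(1 − e^{−4Λ/s}) for all s ∈ [Λ, Λ + η], and v_Λ(s) = 2a·√((Λ + 2Λ^{1/4} − s)/(a + Λ + 2Λ^{1/4} − s)) for all s ∈ [Λ + Λ^{1/4} − η, Λ + Λ^{1/4}]. -/
import Mathlib


open Real Set

noncomputable section

/-- The constant `a = 1 − e^{−4} + (1/3)·(1 − e^{−4})²·Λ^{−1/4}`. -/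
def aConst (Λ : ℝ) : ℝ :=
  1 - Real.exp (-4) + (1 / 3) * (1 - Real.exp (-4)) ^ 2 * Λ ^ (-(1 : ℝ) / 4)

/-- The interpolated cap profile
`v_Λ(s) = (1 − e^{−4Λ/s}) + a·√((Λ + 2Λ^{1/4} − s)/(a + Λ + 2Λ^{1/4} − s))
  − Λ^{−1/4}·Φ(Λ^{1/4}·((1 − e^{−4Λ/s}) − a·√((Λ + 2Λ^{1/4} − s)/(a + Λ + 2Λ^{1/4} − s))))`. -/
def vProfile (Λ : ℝ) (Φ : ℝ → ℝ) (s : ℝ) : ℝ :=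
  (1 - Real.exp (-(4 * Λ) / s))
  + aConst Λ * Real.sqrt ((Λ + 2 * Λ ^ ((1 : ℝ) / 4) - s)
      / (aConst Λ + Λ + 2 * Λ ^ ((1 : ℝ) / 4) - s))
  - Λ ^ (-(1 : ℝ) / 4) * Φ (Λ ^ ((1 : ℝ) / 4) *
      ((1 - Real.exp (-(4 * Λ) / s))
        - aConst Λ * Real.sqrt ((Λ + 2 * Λ ^ ((1 : ℝ) / 4) - s)
            / (aConst Λ + Λ + 2 * Λ ^ ((1 : ℝ) / 4) - s))))

lemma exp4_bounds : (54.55 : ℝ) < Real.exp 4 ∧ Real.exp 4 < 54.65 := by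
  have h1 := Real.exp_one_gt_d9
  have h2 := Real.exp_one_lt_d9
  have h4 : Real.exp 4 = Real.exp 1 * Real.exp 1 * Real.exp 1 * Real.exp 1 := by
    rw [← Real.exp_add, ← Real.exp_add, ← Real.exp_add]; norm_num
  have hsq : 7.389 < Real.exp 1 * Real.exp 1 ∧ Real.exp 1 * Real.exp 1 < 7.3891 := by
    constructor <;> nlinarith
  constructor <;> nlinarith [hsq.1, hsq.2]

lemma expneg4_bounds : (0.0182 : ℝ) < Real.exp (-4) ∧ Real.exp (-4) < 0.01834 := by
  have h := exp4_bounds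
  have he : Real.exp (-4) = (Real.exp 4)⁻¹ := by rw [← Real.exp_neg]
  rw [he]
  constructor
  · rw [lt_inv_comm₀ (by norm_num) (by linarith [h.1])]; linarith [h.2]
  · rw [inv_lt_comm₀ (by linarith [h.1]) (by norm_num)]; linarith [h.1]

lemma sqrt_lower (a t : ℝ) (ha : 0 < a) (ht : 0 < t) (hat : a ≤ 3 * t) :
    1 - a / (2 * t) ≤ Real.sqrt (t / (a + t)) := by
  rcases le_or_gt (1 - a / (2 * t)) 0 with h | h
  · exact h.trans (Real.sqrt_nonneg _)
  · rw [show (1 - a / (2 * t)) = Real.sqrt ((1 - a / (2*t))^2) from (Real.sqrt_sq h.le).symm]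
    apply Real.sqrt_le_sqrt
    set u := a / (2 * t) with hu
    have hu1 : u * (2 * t) = a := div_mul_cancel₀ a (by positivity)
    have hu2 : u ≤ 3 / 2 := by rw [hu, div_le_iff₀ (by positivity)]; linarith
    have hu0 : 0 < u := by positivity
    rw [le_div_iff₀ (by positivity)]
    nlinarith [mul_nonneg (mul_nonneg ht.le (sq_nonneg u)) (by linarith : (0:ℝ) ≤ 3 - 2*u), sq_nonneg u]

lemma sqrt_upper (a t : ℝ) (ha : 0 < a) (ht : 0 < t) :
    Real.sqrt (t / (a + t)) ≤ 1 - a / (2 * (a + t)) := by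
  have hpos : 0 < a + t := by linarith
  have h0 : 0 ≤ 1 - a / (2 * (a + t)) := by
    rw [sub_nonneg, div_le_one (by positivity)]; linarith
  rw [show (1 - a / (2 * (a+t))) = Real.sqrt ((1 - a / (2*(a+t)))^2) from (Real.sqrt_sq h0).symm]
  apply Real.sqrt_le_sqrt
  set u := a / (2 * (a + t)) with hu
  have hu1 : u * (2 * (a + t)) = a := div_mul_cancel₀ a (by positivity)
  have ht' : t / (a + t) = 1 - 2 * u := by field_simp; linarith
  rw [ht']
  nlinarith [sq_nonneg u]

lemma vProfile_eq_abs (Λ : ℝ) (hΛ : 0 < Λ) (Φ : ℝ → ℝ)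
    (hΦ : ∀ z : ℝ, 1 / 100 ≤ |z| → Φ z = |z|) (s : ℝ)
    (h : 1 / 100 ≤ |Λ ^ ((1 : ℝ) / 4) * ((1 - Real.exp (-(4 * Λ) / s))
        - aConst Λ * Real.sqrt ((Λ + 2 * Λ ^ ((1 : ℝ) / 4) - s)
            / (aConst Λ + Λ + 2 * Λ ^ ((1 : ℝ) / 4) - s)))|) :
    vProfile Λ Φ s = (1 - Real.exp (-(4 * Λ) / s))
      + aConst Λ * Real.sqrt ((Λ + 2 * Λ ^ ((1 : ℝ) / 4) - s)
          / (aConst Λ + Λ + 2 * Λ ^ ((1 : ℝ) / 4) - s))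
      - |(1 - Real.exp (-(4 * Λ) / s))
          - aConst Λ * Real.sqrt ((Λ + 2 * Λ ^ ((1 : ℝ) / 4) - s)
              / (aConst Λ + Λ + 2 * Λ ^ ((1 : ℝ) / 4) - s))| := by
  have hLpos : 0 < Λ ^ ((1 : ℝ) / 4) := Real.rpow_pos_of_pos hΛ _
  unfold vProfile
  rw [hΦ _ h, abs_mul, abs_of_pos hLpos,
    show Λ ^ (-(1 : ℝ) / 4) = (Λ ^ ((1 : ℝ) / 4))⁻¹ by
      rw [neg_div, Real.rpow_neg hΛ.le],
    inv_mul_cancel_left₀ (ne_of_gt hLpos)]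

set_option maxHeartbeats 2000000 in
/-- There exists `Λ₀ ≥ 2` such that for all `Λ ≥ Λ₀` and every
convex even `Φ` with `Φ(z) = |z|` for `|z| ≥ 1/100`, there is `η > 0` so that
`v_Λ(s) = 2(1 − e^{−4Λ/s})` for `s ∈ [Λ, Λ + η]` and
`v_Λ(s) = 2a·√((Λ + 2Λ^{1/4} − s)/(a + Λ + 2Λ^{1/4} − s))` for
`s ∈ [Λ + Λ^{1/4} − η, Λ + Λ^{1/4}]`. -/
theorem stmt12 :
    ∃ Λ₀ : ℝ, 2 ≤ Λ₀ ∧ ∀ Λ : ℝ, Λ₀ ≤ Λ →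
      ∀ Φ : ℝ → ℝ, ConvexOn ℝ Set.univ Φ → (∀ z : ℝ, Φ (-z) = Φ z) →
        (∀ z : ℝ, 1 / 100 ≤ |z| → Φ z = |z|) →
        ∃ η > (0 : ℝ),
          (∀ s ∈ Set.Icc Λ (Λ + η),
            vProfile Λ Φ s = 2 * (1 - Real.exp (-(4 * Λ) / s))) ∧
          (∀ s ∈ Set.Icc (Λ + Λ ^ ((1 : ℝ) / 4) - η) (Λ + Λ ^ ((1 : ℝ) / 4)),
            vProfile Λ Φ s = 2 * (aConst Λ *
              Real.sqrt ((Λ + 2 * Λ ^ ((1 : ℝ) / 4) - s)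
                / (aConst Λ + Λ + 2 * Λ ^ ((1 : ℝ) / 4) - s)))) := by
  refine ⟨10 ^ 8, by norm_num, ?_⟩
  intro Λ hΛ Φ _ _ hΦ
  have h10 : ((10 : ℝ) ^ 8 : ℝ) = 100000000 := by norm_num
  have hΛpos : (0 : ℝ) < Λ := by rw [h10] at hΛ; linarith
  have hE := expneg4_bounds
  obtain ⟨c, hc⟩ : ∃ x : ℝ, x = 1 - Real.exp (-4) := ⟨_, rfl⟩
  have hc1 : (0.9816 : ℝ) < c := by rw [hc]; linarith [hE.2]
  have hc2 : c < 0.9818 := by rw [hc]; linarith [hE.1]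
  have hcpos : (0 : ℝ) < c := by linarith
  obtain ⟨L, hLdef⟩ : ∃ x : ℝ, x = Λ ^ ((1:ℝ)/4) := ⟨_, rfl⟩
  have hLpos : (0 : ℝ) < L := hLdef ▸ Real.rpow_pos_of_pos hΛpos _
  have hL : (100 : ℝ) ≤ L := by
    have h1 : ((10:ℝ) ^ 8) ^ ((1:ℝ)/4) ≤ Λ ^ ((1:ℝ)/4) :=
      Real.rpow_le_rpow (by norm_num) hΛ (by norm_num)
    have h2 : ((10:ℝ) ^ 8) ^ ((1:ℝ)/4) = 100 := by
      rw [show ((10:ℝ) ^ 8) = (100:ℝ) ^ (4:ℕ) by norm_num, ← Real.rpow_natCast 100 4,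
        ← Real.rpow_mul (by norm_num)]
      norm_num
    rw [hLdef]; linarith
  have hLne : L ≠ 0 := by positivity
  have hL4 : L ^ (4:ℕ) = Λ := by
    rw [hLdef, ← Real.rpow_natCast (Λ ^ ((1:ℝ)/4)) 4, ← Real.rpow_mul hΛpos.le]
    norm_num
  obtain ⟨a, hadef⟩ : ∃ x : ℝ, x = aConst Λ := ⟨_, rfl⟩
  have haval : a = c + c ^ 2 / (3 * L) := by
    rw [hadef]; unfold aConst
    rw [neg_div, Real.rpow_neg hΛpos.le, ← hLdef, ← hc]
    field_simp
  have hca : c < a := by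
    rw [haval]
    have : 0 < c ^ 2 / (3 * L) := by positivity
    linarith
  have hapos : 0 < a := by linarith
  have haU : a ≤ 0.9851 := by
    rw [haval]
    have h1 : c ^ 2 / (3 * L) ≤ c ^ 2 / 300 := by
      apply div_le_div_of_nonneg_left (sq_nonneg c) (by norm_num) (by linarith)
    nlinarith [mul_nonneg (by linarith : (0:ℝ) ≤ 0.9818 - c) hcpos.le]
  rw [← hLdef, ← hadef]
  refine ⟨1, one_pos, ?_, ?_⟩
  · -- near s = Λ
    intro s hs
    obtain ⟨hs1, hs2⟩ := hs
    have hspos : 0 < s := lt_of_lt_of_le hΛpos hs1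
    obtain ⟨t, htdef⟩ : ∃ x : ℝ, x = Λ + 2 * L - s := ⟨_, rfl⟩
    have harg : (Λ + 2 * L - s) / (a + Λ + 2 * L - s) = t / (a + t) := by
      rw [htdef]; congr 1; ring
    have ht1 : 2 * L - 1 ≤ t := by rw [htdef]; linarith
    have htpos : 0 < t := by linarith
    obtain ⟨Q, hQdef⟩ : ∃ x : ℝ, x = a * Real.sqrt (t / (a + t)) := ⟨_, rfl⟩
    obtain ⟨P, hPdef⟩ : ∃ x : ℝ, x = 1 - Real.exp (-(4 * Λ) / s) := ⟨_, rfl⟩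
    have hP : P ≤ c := by
      rw [hPdef, hc]
      have h4 : 4 * Λ / s ≤ 4 := by rw [div_le_iff₀ hspos]; linarith
      have h5 : (-4 : ℝ) ≤ -(4 * Λ) / s := by rw [neg_div]; linarith
      have := Real.exp_le_exp.mpr h5
      linarith
    have hQ : a - a ^ 2 / (2 * t) ≤ Q := by
      have h := sqrt_lower a t hapos htpos (by nlinarith)
      calc a - a ^ 2 / (2 * t) = a * (1 - a / (2 * t)) := by ring
        _ ≤ Q := by rw [hQdef]; exact mul_le_mul_of_nonneg_left h hapos.le
    have hd : a ^ 2 / (2 * t) ≤ a ^ 2 / (2 * (2 * L - 1)) :=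
      div_le_div_of_nonneg_left (sq_nonneg a) (by linarith) (by linarith)
    have hLa : L * (a ^ 2 / (2 * (2 * L - 1))) ≤ 0.2513 * a ^ 2 := by
      rw [← mul_div_assoc, div_le_iff₀ (by linarith)]
      nlinarith [mul_nonneg (sq_nonneg a) (by linarith : (0:ℝ) ≤ 0.2513 * (2 * (2 * L - 1)) - L)]
    have hLac : L * (a - c) = c ^ 2 / 3 := by
      rw [haval]; field_simp; ring
    have hgap : 1 / 100 ≤ L * (Q - P) := by
      have hQP : a - a ^ 2 / (2 * (2 * L - 1)) - c ≤ Q - P := by linarith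
      have hmul := mul_le_mul_of_nonneg_left hQP (by linarith : (0:ℝ) ≤ L)
      have hid : L * (a - a ^ 2 / (2 * (2 * L - 1)) - c)
          = L * (a - c) - L * (a ^ 2 / (2 * (2 * L - 1))) := by ring
      rw [hid, hLac] at hmul
      have hfin : c ^ 2 / 3 - 0.2513 * a ^ 2 ≤ L * (Q - P) := by linarith
      have hnum : (1:ℝ) / 100 ≤ c ^ 2 / 3 - 0.2513 * a ^ 2 := by
        nlinarith [mul_nonneg (by linarith : (0:ℝ) ≤ 0.9851 - a) hapos.le,
          mul_nonneg (by linarith : (0:ℝ) ≤ c - 0.9816) (by linarith : (0:ℝ) ≤ c - 0.9816)]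
      linarith
    have hQPle : P - Q ≤ 0 := by nlinarith
    have habs : 1 / 100 ≤ |L * (P - Q)| := by
      refine hgap.trans ?_
      rw [show L * (P - Q) = -(L * (Q - P)) by ring, abs_neg]
      exact le_abs_self _
    rw [vProfile_eq_abs Λ hΛpos Φ hΦ s
      (by rw [← hLdef, ← hadef, harg, ← hQdef, ← hPdef]; exact habs)]
    rw [← hLdef, ← hadef, harg, ← hQdef, ← hPdef, abs_of_nonpos hQPle]
    ring
  · -- near s = Λ + L
    intro s hs
    obtain ⟨hs1, hs2⟩ := hs
    have hspos : 0 < s := by linarith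
    obtain ⟨t, htdef⟩ : ∃ x : ℝ, x = Λ + 2 * L - s := ⟨_, rfl⟩
    have harg : (Λ + 2 * L - s) / (a + Λ + 2 * L - s) = t / (a + t) := by
      rw [htdef]; congr 1; ring
    have ht1 : L ≤ t := by rw [htdef]; linarith
    have ht2 : t ≤ L + 1 := by rw [htdef]; linarith
    have htpos : 0 < t := by linarith
    obtain ⟨Q, hQdef⟩ : ∃ x : ℝ, x = a * Real.sqrt (t / (a + t)) := ⟨_, rfl⟩
    obtain ⟨P, hPdef⟩ : ∃ x : ℝ, x = 1 - Real.exp (-(4 * Λ) / s) := ⟨_, rfl⟩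
    have hΛL : (0:ℝ) < Λ + L := by linarith
    have hP : c - 0.15 / L ^ 3 ≤ P := by
      have e1 : Real.exp (-(4 * Λ) / s) ≤ Real.exp (-(4 * Λ) / (Λ + L)) := by
        apply Real.exp_le_exp.mpr
        have h1 : 4 * Λ / (Λ + L) ≤ 4 * Λ / s :=
          div_le_div_of_nonneg_left (by linarith) hspos (by linarith)
        rw [neg_div, neg_div]; linarith
      obtain ⟨x, hx⟩ : ∃ y : ℝ, y = 4 * L / (Λ + L) := ⟨_, rfl⟩
      have hxval : -(4 * Λ) / (Λ + L) = -4 + x := by rw [hx]; field_simp; ring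
      have hx0 : 0 ≤ x := by rw [hx]; positivity
      have hxs : x ≤ 4 / L ^ 3 := by
        rw [hx, div_le_div_iff₀ hΛL (by positivity)]
        nlinarith [hL4]
      have hxhalf : x ≤ 1 / 2 := by
        have h3 : (4 : ℝ) / L ^ 3 ≤ 1 / 2 := by
          rw [div_le_div_iff₀ (by positivity) (by norm_num)]
          nlinarith [pow_le_pow_left₀ (by norm_num : (0:ℝ) ≤ 100) hL 3]
        linarith
      have e2 : Real.exp x ≤ 1 + 2 * x := by
        have h1 : 1 - x ≤ Real.exp (-x) := by linarith [Real.add_one_le_exp (-x)]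
        have h2 : Real.exp x * Real.exp (-x) = 1 := by rw [← Real.exp_add]; simp
        nlinarith [Real.exp_pos x, Real.exp_pos (-x)]
      have e3 : Real.exp (-(4 * Λ) / (Λ + L)) = Real.exp (-4) * Real.exp x := by
        rw [hxval, Real.exp_add]
      have h5 : Real.exp (-4) * Real.exp x ≤ Real.exp (-4) * (1 + 2 * x) :=
        mul_le_mul_of_nonneg_left e2 (Real.exp_pos _).le
      have h6 : Real.exp (-4) * (1 + 2 * x) ≤ Real.exp (-4) + 0.0184 * (2 * (4 / L ^ 3)) := by
        nlinarith [hE.1, hE.2]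
      have h7 : (0.0184 : ℝ) * (2 * (4 / L ^ 3)) ≤ 0.15 / L ^ 3 := by
        rw [show (0.0184 : ℝ) * (2 * (4 / L ^ 3)) = 0.1472 / L ^ 3 by ring]
        gcongr
        norm_num
      rw [hPdef, hc]
      rw [e3] at e1
      linarith
    have hQu : Q ≤ a - a ^ 2 / (2 * (a + t)) := by
      have h := sqrt_upper a t hapos htpos
      calc Q ≤ a * (1 - a / (2 * (a + t))) := by
            rw [hQdef]; exact mul_le_mul_of_nonneg_left h hapos.le
        _ = a - a ^ 2 / (2 * (a + t)) := by ring
    have hQ2 : a ^ 2 / (2 * (a + L + 1)) ≤ a ^ 2 / (2 * (a + t)) :=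
      div_le_div_of_nonneg_left (sq_nonneg a) (by linarith) (by linarith)
    have hLca : L * (c - a) = -(c ^ 2 / 3) := by
      rw [haval]; field_simp; ring
    have h015 : L * (0.15 / L ^ 3) ≤ 0.000015 := by
      rw [show L * (0.15 / L ^ 3) = 0.15 / L ^ 2 by field_simp]
      rw [div_le_iff₀ (by positivity)]
      nlinarith
    have hcoef : 0.49 * a ^ 2 ≤ L * (a ^ 2 / (2 * (a + L + 1))) := by
      rw [← mul_div_assoc, le_div_iff₀ (by linarith)]
      nlinarith [mul_nonneg (sq_nonneg a) (by linarith : (0:ℝ) ≤ L - 0.49 * (2 * (a + L + 1)))]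
    have hgap : 1 / 100 ≤ L * (P - Q) := by
      have hPQ : (c - 0.15 / L ^ 3) - (a - a ^ 2 / (2 * (a + L + 1))) ≤ P - Q := by linarith
      have hmul := mul_le_mul_of_nonneg_left hPQ (by linarith : (0:ℝ) ≤ L)
      have hid : L * ((c - 0.15 / L ^ 3) - (a - a ^ 2 / (2 * (a + L + 1))))
          = L * (c - a) - L * (0.15 / L ^ 3) + L * (a ^ 2 / (2 * (a + L + 1))) := by ring
      rw [hid, hLca] at hmul
      have hfin : -(c ^ 2 / 3) - 0.000015 + 0.49 * a ^ 2 ≤ L * (P - Q) := by linarith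
      have hnum : (1:ℝ) / 100 ≤ -(c ^ 2 / 3) - 0.000015 + 0.49 * a ^ 2 := by
        nlinarith [mul_nonneg (by linarith : (0:ℝ) ≤ a - c) (by linarith : (0:ℝ) ≤ a + c),
          mul_nonneg (by linarith : (0:ℝ) ≤ c - 0.9816) (by linarith : (0:ℝ) ≤ c - 0.9816),
          mul_nonneg (by linarith : (0:ℝ) ≤ 0.9818 - c) hcpos.le]
      linarith
    have hQPge : 0 ≤ P - Q := by nlinarith
    have habs : 1 / 100 ≤ |L * (P - Q)| := hgap.trans (le_abs_self _)
    rw [vProfile_eq_abs Λ hΛpos Φ hΦ s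
      (by rw [← hLdef, ← hadef, harg, ← hQdef, ← hPdef]; exact habs)]
    rw [← hLdef, ← hadef, harg, ← hQdef, ← hPdef, abs_of_nonneg hQPge]
    ring

end
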